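/- Assume α₂ > α₃ and A∞ > B. Then h₂ > h₁, where h₂ := ((B−C)/(A∞−B))·√(k₂·k₃·c₂/(π·c₃·α₃))·(1/erf(z₀·√(α₁/α₂))) and h₁ := (k₁/√(π·α₁))·(C−D)/(A∞−C). -/

import Mathlib

noncomputable section

/-- The error function `erf x = (2/√π) ∫₀ˣ exp(−s²) ds`. -/
def erf (x : ℝ) : ℝ := (2 / Real.sqrt Real.pi) * ∫ s in (0:ℝ)..x, Real.exp (-(s^2))

/-- The complementary error function. -/
def erfc (x : ℝ) : ℝ := 1 - erf x

/-- Physical data of the three-phase Stefan problem: positive thermal conductivities,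
specific heats, mass density, latent heats, and temperatures `B > C > D`. -/
structure Params where
  k₁ : ℝ
  k₂ : ℝ
  k₃ : ℝ
  c₁ : ℝ
  c₂ : ℝ
  c₃ : ℝ
  ρ : ℝ
  ℓ₁ : ℝ
  ℓ₂ : ℝ
  B : ℝ
  C : ℝ
  D : ℝ
  hk₁ : 0 < k₁
  hk₂ : 0 < k₂
  hk₃ : 0 < k₃
  hc₁ : 0 < c₁
  hc₂ : 0 < c₂
  hc₃ : 0 < c₃
  hρ : 0 < ρ
  hℓ₁ : 0 < ℓ₁
  hℓ₂ : 0 < ℓ₂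
  hBC : C < B
  hCD : D < C

namespace Params

/-- Thermal diffusivity of phase 1. -/
def α₁ (p : Params) : ℝ := p.k₁ / (p.ρ * p.c₁)

/-- Thermal diffusivity of phase 2. -/
def α₂ (p : Params) : ℝ := p.k₂ / (p.ρ * p.c₂)

/-- Thermal diffusivity of phase 3. -/
def α₃ (p : Params) : ℝ := p.k₃ / (p.ρ * p.c₃)

/-- Stefan number `Ste₁ = c₁(C−D)/ℓ₁`. -/
def Ste₁ (p : Params) : ℝ := p.c₁ * (p.C - p.D) / p.ℓ₁

/-- Stefan number `Ste₂ = c₂(B−C)/ℓ₂`. -/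
def Ste₂ (p : Params) : ℝ := p.c₂ * (p.B - p.C) / p.ℓ₂

/-- `φ(z) = z + (Ste₁/√π) exp(−z²)/erfc(z)`. -/
def φ (p : Params) (z : ℝ) : ℝ :=
  z + (p.Ste₁ / Real.sqrt Real.pi) * Real.exp (-(z^2)) / erfc z

/-- `H(z) = erf(z√(α₁/α₂)) − (Ste₂/√π)(ℓ₂/ℓ₁)√(k₂c₁/(k₁c₂)) exp(−z²α₁/α₂)/φ(z)`. -/
def H (p : Params) (z : ℝ) : ℝ :=
  erf (z * Real.sqrt (p.α₁ / p.α₂)) -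
    (p.Ste₂ / Real.sqrt Real.pi) * (p.ℓ₂ / p.ℓ₁) *
      Real.sqrt (p.k₂ * p.c₁ / (p.k₁ * p.c₂)) *
      (Real.exp (-(z^2) * (p.α₁ / p.α₂)) / p.φ z)

/-- `Q(z) = (ℓ₁/ℓ₂) φ(z) exp(z² α₁/α₂)`. -/
def Q (p : Params) (z : ℝ) : ℝ :=
  (p.ℓ₁ / p.ℓ₂) * p.φ z * Real.exp (z^2 * (p.α₁ / p.α₂))

/-- The function `T` arising from the Robin (convective) boundary condition with
heat-transfer coefficient `h₀` and bulk temperature `Ainf`. -/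
def T (p : Params) (h₀ Ainf : ℝ) (z : ℝ) : ℝ :=
  (p.Ste₂ / (Real.sqrt Real.pi * p.c₂)) * ((Ainf - p.B) / (p.B - p.C)) *
    Real.sqrt (p.k₃ * p.c₁ * p.c₃ / p.k₁) *
    (Real.exp (-(z^2) * p.α₁ * (1 / p.α₃ - 1 / p.α₂)) /
      (p.k₃ / (h₀ * Real.sqrt (Real.pi * p.α₃)) + erf (z * Real.sqrt (p.α₁ / p.α₃)))) -
  z * Real.exp (z^2 * (p.α₁ / p.α₂))

/-- The function `V` arising from the Dirichlet boundary condition with temperature `A`. -/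
def V (p : Params) (A : ℝ) (z : ℝ) : ℝ :=
  ((A - p.B) / p.ℓ₂) * Real.sqrt (p.c₁ * p.c₃ * p.k₃ / (Real.pi * p.k₁)) *
    (Real.exp (-(z^2) * (p.α₁ / p.α₃ - p.α₁ / p.α₂)) / erf (z * Real.sqrt (p.α₁ / p.α₃))) -
  z * Real.exp (z^2 * (p.α₁ / p.α₂))

/-- The function `P` arising from the Neumann boundary condition with flux coefficient `q₀`. -/
def P (p : Params) (q₀ : ℝ) (z : ℝ) : ℝ :=
  Real.exp (z^2 * (p.α₁ / p.α₂)) *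
    (-z + (q₀ / p.ℓ₂) * Real.sqrt (p.c₁ / (p.ρ * p.k₁)) * Real.exp (-(z^2) * (p.α₁ / p.α₃)))

/-- Critical heat-transfer coefficient `h₂`. -/
def h2 (p : Params) (Ainf z₀ : ℝ) : ℝ :=
  ((p.B - p.C) / (Ainf - p.B)) *
    Real.sqrt (p.k₂ * p.k₃ * p.c₂ / (Real.pi * p.c₃ * p.α₃)) *
    (1 / erf (z₀ * Real.sqrt (p.α₁ / p.α₂)))

/-- Critical heat-flux coefficient `q₂`. -/
def q2 (p : Params) (z₀ : ℝ) : ℝ :=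
  p.k₂ * (p.B - p.C) / (Real.sqrt (p.α₂ * Real.pi) * erf (z₀ * Real.sqrt (p.α₁ / p.α₂)))

end Params

/-! At the positive root `z₀` of `H`, the product `erf (z₀ √(α₁/α₂)) · φ z₀` equals a positive
constant times `exp (-z₀² α₁/α₂) < 1`, while `φ z₀ > Ste₁/√π` because `erfc z ≤ exp (-z²)` for
`z ≥ 0` (`erfc` is a Gaussian tail and `(t + z)² ≥ t² + z²`). Expressed through the thermal
effusivities `√(kᵢ ρ cᵢ)` this reads `(C - D) √(k₁ρc₁) erf (z₀ √(α₁/α₂)) < (B - C) √(k₂ρc₂)`,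
and `h₁ < h₂` follows after dividing by `√π (A∞ - C) erf (z₀ √(α₁/α₂))`, since `A∞ - B < A∞ - C`. -/

open MeasureTheory Set Real

lemma integrable_exp_neg_sq : Integrable fun s : ℝ => exp (-s ^ 2) := by
  simpa using integrable_exp_neg_mul_sq one_pos

lemma integral_Ioi_zero_exp_neg_sq : ∫ s in Ioi (0 : ℝ), exp (-s ^ 2) = √π / 2 := by
  simpa using integral_gaussian_Ioi 1

lemma erfc_eq_integral_Ioi (x : ℝ) : erfc x = 2 / √π * ∫ s in Ioi x, exp (-s ^ 2) := by
  have hsplit := intervalIntegral.integral_interval_add_Ioi (a := 0) (b := x)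
    integrable_exp_neg_sq.integrableOn integrable_exp_neg_sq.integrableOn
  rw [integral_Ioi_zero_exp_neg_sq] at hsplit
  have : √π ≠ 0 := (sqrt_pos.2 pi_pos).ne'
  rw [erfc, erf, eq_sub_of_add_eq' hsplit]
  field_simp

lemma erfc_pos (x : ℝ) : 0 < erfc x := by
  have : NeZero (volume.restrict (Ioi x)) := ⟨by simp⟩
  rw [erfc_eq_integral_Ioi]
  exact mul_pos (by positivity) (integral_exp_pos integrable_exp_neg_sq.integrableOn)

lemma integral_Ioi_exp_neg_sq_le {x : ℝ} (hx : 0 ≤ x) :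
    ∫ s in Ioi x, exp (-s ^ 2) ≤ exp (-x ^ 2) * (√π / 2) := by
  have hshift : ∫ s in Ioi x, exp (-s ^ 2) = ∫ t in Ioi 0, exp (-(t + x) ^ 2) := by
    simpa only [image_add_const_Ioi, zero_add] using
      (measurePreserving_add_right volume x).setIntegral_image_emb
        (measurableEmbedding_addRight x) (fun s => exp (-s ^ 2)) (Ioi 0)
  rw [hshift, ← integral_Ioi_zero_exp_neg_sq, ← integral_const_mul]
  refine setIntegral_mono_on (integrable_exp_neg_sq.comp_add_right x).integrableOn
    (integrable_exp_neg_sq.const_mul _).integrableOn measurableSet_Ioi fun t ht => ?_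
  rw [← exp_add, exp_le_exp]
  nlinarith [mul_nonneg (le_of_lt ht) hx]

lemma erfc_le_exp_neg_sq {x : ℝ} (hx : 0 ≤ x) : erfc x ≤ exp (-x ^ 2) := by
  have : 0 < √π := sqrt_pos.2 pi_pos
  calc erfc x ≤ 2 / √π * (exp (-x ^ 2) * (√π / 2)) := by
        rw [erfc_eq_integral_Ioi]; gcongr; exact integral_Ioi_exp_neg_sq_le hx
    _ = exp (-x ^ 2) := by field_simp

lemma erf_pos {x : ℝ} (hx : 0 < x) : 0 < erf x :=
  mul_pos (by positivity) (intervalIntegral.intervalIntegral_pos_of_pos_on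
    (Continuous.intervalIntegrable (by fun_prop) _ _) (fun s _ => exp_pos _) hx)

def thermalEffusivity (k ρ c : ℝ) : ℝ := √(k * ρ * c)

lemma thermalEffusivity_pos {k ρ c : ℝ} (hk : 0 < k) (hρ : 0 < ρ) (hc : 0 < c) :
    0 < thermalEffusivity k ρ c :=
  sqrt_pos.2 (by positivity)

lemma div_sqrt_pi_mul_diffusivity {k ρ c : ℝ} (hk : 0 < k) (hρ : 0 < ρ) (hc : 0 < c) :
    k / √(π * (k / (ρ * c))) = thermalEffusivity k ρ c / √π := by
  rw [thermalEffusivity, ← pow_left_inj₀ (by positivity) (by positivity) two_ne_zero, div_pow,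
    div_pow, sq_sqrt (by positivity), sq_sqrt (by positivity), sq_sqrt pi_pos.le]
  field_simp

namespace Params

variable (p : Params)

lemma α₁_pos : 0 < p.α₁ := div_pos p.hk₁ (mul_pos p.hρ p.hc₁)

lemma α₂_pos : 0 < p.α₂ := div_pos p.hk₂ (mul_pos p.hρ p.hc₂)

lemma erf_pos_of_pos {z : ℝ} (hz : 0 < z) : 0 < erf (z * √(p.α₁ / p.α₂)) :=
  erf_pos (mul_pos hz (sqrt_pos.2 (div_pos p.α₁_pos p.α₂_pos)))

lemma Ste₁_pos : 0 < p.Ste₁ := div_pos (mul_pos p.hc₁ (sub_pos.2 p.hCD)) p.hℓ₁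

lemma Ste₂_pos : 0 < p.Ste₂ := div_pos (mul_pos p.hc₂ (sub_pos.2 p.hBC)) p.hℓ₂

lemma Ste₁_div_sqrt_pi_lt_φ {z : ℝ} (hz : 0 < z) : p.Ste₁ / √π < p.φ z := by
  have hratio : 1 ≤ exp (-z ^ 2) / erfc z :=
    (one_le_div (erfc_pos z)).2 (erfc_le_exp_neg_sq hz.le)
  have := p.Ste₁_pos
  calc p.Ste₁ / √π < z + p.Ste₁ / √π * 1 := by linarith
    _ ≤ z + p.Ste₁ / √π * (exp (-z ^ 2) / erfc z) := by gcongr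
    _ = p.φ z := by rw [φ, mul_div_assoc]

lemma erf_mul_Ste₁_lt_of_H_eq_zero {z : ℝ} (hz : 0 < z) (hH : p.H z = 0) :
    erf (z * √(p.α₁ / p.α₂)) * p.Ste₁ <
      p.Ste₂ * (p.ℓ₂ / p.ℓ₁) * √(p.k₂ * p.c₁ / (p.k₁ * p.c₂)) := by
  have := p.hk₁; have := p.hk₂; have := p.hc₁; have := p.hc₂; have := p.hℓ₁; have := p.hℓ₂
  have hsqrtπ : 0 < √π := sqrt_pos.2 pi_pos
  set K := p.Ste₂ / √π * (p.ℓ₂ / p.ℓ₁) * √(p.k₂ * p.c₁ / (p.k₁ * p.c₂)) with hK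
  have hKpos : 0 < K := by have := p.Ste₂_pos; positivity
  have hexp : exp (-z ^ 2 * (p.α₁ / p.α₂)) < 1 := by
    rw [exp_lt_one_iff, neg_mul, neg_lt_zero]
    have := div_pos p.α₁_pos p.α₂_pos
    positivity
  have herf := p.erf_pos_of_pos hz
  have hφ := p.Ste₁_div_sqrt_pi_lt_φ hz
  have hφpos : 0 < p.φ z := (div_pos p.Ste₁_pos hsqrtπ).trans hφ
  have hbalance : erf (z * √(p.α₁ / p.α₂)) * p.φ z = K * exp (-z ^ 2 * (p.α₁ / p.α₂)) := by
    rw [H, sub_eq_zero] at hH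
    rw [hH, hK]; field_simp
  have : erf (z * √(p.α₁ / p.α₂)) * (p.Ste₁ / √π) < K := by
    calc _ < erf (z * √(p.α₁ / p.α₂)) * p.φ z := by gcongr
      _ < K := by rw [hbalance]; exact mul_lt_of_lt_one_right hKpos hexp
  rw [hK] at this
  field_simp at this ⊢
  linarith

lemma thermalEffusivity_mul_erf_lt_of_H_eq_zero {z : ℝ} (hz : 0 < z) (hH : p.H z = 0) :
    (p.C - p.D) * thermalEffusivity p.k₁ p.ρ p.c₁ * erf (z * √(p.α₁ / p.α₂)) <
      (p.B - p.C) * thermalEffusivity p.k₂ p.ρ p.c₂ := by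
  have := p.hk₁; have := p.hk₂; have := p.hc₁; have := p.hc₂; have := p.hρ; have := p.hℓ₁
  have := p.hℓ₂
  have hratio : p.c₂ * √(p.k₂ * p.c₁ / (p.k₁ * p.c₂)) * thermalEffusivity p.k₁ p.ρ p.c₁ =
      p.c₁ * thermalEffusivity p.k₂ p.ρ p.c₂ := by
    rw [thermalEffusivity, thermalEffusivity, ← pow_left_inj₀ (by positivity) (by positivity)
      two_ne_zero, mul_pow, mul_pow, mul_pow, sq_sqrt (by positivity), sq_sqrt (by positivity),
      sq_sqrt (by positivity)]
    field_simp
  have hE₁ := thermalEffusivity_pos p.hk₁ p.hρ p.hc₁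
  calc (p.C - p.D) * thermalEffusivity p.k₁ p.ρ p.c₁ * erf (z * √(p.α₁ / p.α₂))
      = erf (z * √(p.α₁ / p.α₂)) * p.Ste₁ * (p.ℓ₁ * thermalEffusivity p.k₁ p.ρ p.c₁ / p.c₁) := by
        rw [Ste₁]; field_simp
    _ < p.Ste₂ * (p.ℓ₂ / p.ℓ₁) * √(p.k₂ * p.c₁ / (p.k₁ * p.c₂)) *
          (p.ℓ₁ * thermalEffusivity p.k₁ p.ρ p.c₁ / p.c₁) :=
        mul_lt_mul_of_pos_right (p.erf_mul_Ste₁_lt_of_H_eq_zero hz hH) (by positivity)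
    _ = (p.B - p.C) * thermalEffusivity p.k₂ p.ρ p.c₂ := by
        generalize √(p.k₂ * p.c₁ / (p.k₁ * p.c₂)) = X at hratio ⊢
        rw [Ste₂]; field_simp; linear_combination (p.B - p.C) * hratio

lemma h2_eq (Ainf z₀ : ℝ) :
    p.h2 Ainf z₀ = (p.B - p.C) / (Ainf - p.B) * (thermalEffusivity p.k₂ p.ρ p.c₂ / √π) /
      erf (z₀ * √(p.α₁ / p.α₂)) := by
  have := p.hk₃; have := p.hc₃; have := p.hρ
  have hsqrt : √(p.k₂ * p.k₃ * p.c₂ / (π * p.c₃ * p.α₃)) =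
      thermalEffusivity p.k₂ p.ρ p.c₂ / √π := by
    rw [thermalEffusivity, ← sqrt_div' _ pi_pos.le, α₃]
    congr 1
    field_simp
  rw [h2, hsqrt, mul_one_div]

end Params

theorem h2_gt_h1_general (p : Params) (Ainf z₀ : ℝ)
    (hAinf : p.B < Ainf)
    (hz₀ : 0 < z₀ ∧ p.H z₀ = 0) :
    (p.k₁ / Real.sqrt (Real.pi * p.α₁)) * ((p.C - p.D) / (Ainf - p.C)) <
      p.h2 Ainf z₀ := by
  obtain ⟨hz, hH⟩ := hz₀
  have hflux := p.thermalEffusivity_mul_erf_lt_of_H_eq_zero hz hH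
  have he : 0 < erf (z₀ * √(p.α₁ / p.α₂)) := p.erf_pos_of_pos hz
  have hE₁ := thermalEffusivity_pos p.hk₁ p.hρ p.hc₁
  have hsqrtπ : 0 < √π := sqrt_pos.2 pi_pos
  have hE₂ := thermalEffusivity_pos p.hk₂ p.hρ p.hc₂
  have hBC := sub_pos.2 p.hBC
  have hAB := sub_pos.2 hAinf
  have hAC : 0 < Ainf - p.C := by linarith
  rw [p.h2_eq, show p.k₁ / √(π * p.α₁) = _ from div_sqrt_pi_mul_diffusivity p.hk₁ p.hρ p.hc₁]
  set e := erf (z₀ * √(p.α₁ / p.α₂))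
  calc thermalEffusivity p.k₁ p.ρ p.c₁ / √π * ((p.C - p.D) / (Ainf - p.C))
      = (p.C - p.D) * thermalEffusivity p.k₁ p.ρ p.c₁ * e / (√π * (Ainf - p.C) * e) := by
        field_simp
    _ < (p.B - p.C) * thermalEffusivity p.k₂ p.ρ p.c₂ / (√π * (Ainf - p.C) * e) := by
        gcongr
    _ < (p.B - p.C) * thermalEffusivity p.k₂ p.ρ p.c₂ / (√π * (Ainf - p.B) * e) := by
        gcongr
        exact p.hBC
    _ = (p.B - p.C) / (Ainf - p.B) * (thermalEffusivity p.k₂ p.ρ p.c₂ / √π) / e := by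
        field_simp

/-- if `α₂ > α₃` and `A∞ > B`, then `h₂ > h₁` where
`h₁ = (k₁/√(πα₁))(C−D)/(A∞−C)`. -/
theorem h2_gt_h1 (p : Params) (Ainf z₀ : ℝ)
    (hα : p.α₃ < p.α₂) (hAinf : p.B < Ainf)
    (hz₀ : 0 < z₀ ∧ p.H z₀ = 0) :
    (p.k₁ / Real.sqrt (Real.pi * p.α₁)) * ((p.C - p.D) / (Ainf - p.C)) <
      p.h2 Ainf z₀ :=
  h2_gt_h1_general p Ainf z₀ hAinf hz₀
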